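/- Let γ ⊆ {1,…,n} be a nonempty proper subset with complement γ̄, and let ρ be a density matrix on the n-qubit Hilbert space that admits a finite decomposition ρ = ∑_α p_α |ψ_α⟩⟨ψ_α| in which every unit vector ψ_α is separable with respect to the bipartition {γ, γ̄}. Then the convex roof extension of η_γ satisfies η_γ(ρ) = 0. -/
import Mathlib


open Finset
open scoped ComplexOrder

/-- Bit strings of length `n` (computational basis labels for `n` qubits). -/
abbrev Bits (n : ℕ) := Fin n → Bool

/-- `bflip δ j` is the bit string `j` with the bits in positions `δ` flipped. -/
def bflip {n : ℕ} (δ : Finset (Fin n)) (j : Bits n) : Bits n :=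
  fun i => if i ∈ δ then !(j i) else j i

/-- The generalized (squared) concurrence `C²_{γ,δ}(ψ)` of a pure state `ψ`,
for disjoint subsets `γ, δ ⊆ {1,…,n}`. -/
noncomputable def Csq {n : ℕ} (γ δ : Finset (Fin n)) (ψ : Bits n → ℂ) : ℝ :=
  ∑ j : Bits n,
    ‖(starRingEnd ℂ) (ψ (bflip (γ ∪ δ) j)) * (starRingEnd ℂ) (ψ j) -
      (starRingEnd ℂ) (ψ (bflip γ j)) * (starRingEnd ℂ) (ψ (bflip δ j))‖ ^ 2

/-- A pure state `ψ` is separable with respect to the bipartition `{γ, γ̄}`: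
it is a product of an amplitude function on the qubits in `γ` and one on those in `γ̄`. -/
def SeparableAcross {n : ℕ} (γ : Finset (Fin n)) (ψ : Bits n → ℂ) : Prop :=
  ∃ (a : ({i // i ∈ γ} → Bool) → ℂ) (b : ({i // i ∈ γᶜ} → Bool) → ℂ),
    ∀ j : Bits n, ψ j = a (fun i => j i.1) * b (fun i => j i.1)

/-- `η_γ(ψ) := ∑_{δ ⊆ γ̄} C²_{γ,δ}(ψ)`. -/
noncomputable def eta {n : ℕ} (γ : Finset (Fin n)) (ψ : Bits n → ℂ) : ℝ :=
  ∑ δ ∈ γᶜ.powerset, Csq γ δ ψ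

/-- The convex roof extension of a function `μ` defined on unit vectors:
the infimum over all finite decompositions `ρ = ∑ α, p α • |ψ α⟩⟨ψ α|`
(with `p α ≥ 0` and `ψ α` unit vectors) of `∑ α, p α * μ (ψ α)`. -/
noncomputable def convexRoof {I : Type} [Fintype I] [DecidableEq I]
    (μ : (I → ℂ) → ℝ) (ρ : Matrix I I ℂ) : ℝ :=
  sInf { x : ℝ | ∃ (k : ℕ) (p : Fin k → ℝ) (ψ : Fin k → I → ℂ),
    (∀ α, 0 ≤ p α) ∧ (∀ α, ∑ j, ‖ψ α j‖ ^ 2 = 1) ∧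
    ρ = ∑ α, (p α : ℂ) • Matrix.of (fun a b => ψ α a * (starRingEnd ℂ) (ψ α b)) ∧
    x = ∑ α, p α * μ (ψ α) }


lemma eta_nonneg {n : ℕ} (γ : Finset (Fin n)) (ψ : Bits n → ℂ) : 0 ≤ eta γ ψ := by
  unfold eta Csq
  positivity

lemma eta_eq_zero_of_sep {n : ℕ} (γ : Finset (Fin n)) (ψ : Bits n → ℂ)
    (h : SeparableAcross γ ψ) : eta γ ψ = 0 := by
  obtain ⟨a, b, hab⟩ := h
  unfold eta
  apply Finset.sum_eq_zero
  intro δ hδ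
  rw [Finset.mem_powerset] at hδ
  unfold Csq
  apply Finset.sum_eq_zero
  intro j _
  have h1 : (fun i : {i // i ∈ γ} => bflip (γ ∪ δ) j i.1)
      = (fun i : {i // i ∈ γ} => bflip γ j i.1) := by
    funext i; simp [bflip, i.2, Finset.mem_union]
  have h2 : (fun i : {i // i ∈ γᶜ} => bflip (γ ∪ δ) j i.1)
      = (fun i : {i // i ∈ γᶜ} => bflip δ j i.1) := by
    funext i; simp [bflip, Finset.mem_union, Finset.mem_compl.mp i.2]
  have h3 : (fun i : {i // i ∈ γ} => bflip δ j i.1)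
      = (fun i : {i // i ∈ γ} => j i.1) := by
    funext i
    have hi : i.1 ∉ δ := fun hh => Finset.mem_compl.mp (hδ hh) i.2
    simp [bflip, hi]
  have h4 : (fun i : {i // i ∈ γᶜ} => bflip γ j i.1)
      = (fun i : {i // i ∈ γᶜ} => j i.1) := by
    funext i; simp [bflip, Finset.mem_compl.mp i.2]
  have hz : (starRingEnd ℂ) (ψ (bflip (γ ∪ δ) j)) * (starRingEnd ℂ) (ψ j) -
      (starRingEnd ℂ) (ψ (bflip γ j)) * (starRingEnd ℂ) (ψ (bflip δ j)) = 0 := by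
    rw [hab, hab, hab, hab, h1, h2, h3, h4]
    simp only [map_mul]
    ring
  rw [hz]
  simp

/-- If a density matrix `ρ` on `n` qubits admits a finite decomposition into pure states
that are all separable with respect to the bipartition `{γ, γ̄}` (for `γ` a nonempty
proper subset), then the convex roof extension of `η_γ` vanishes at `ρ`. -/
theorem convexRoof_eta_eq_zero_of_separable_decomposition (n : ℕ) (hn : 2 ≤ n)
    (γ : Finset (Fin n)) (hne : γ.Nonempty) (hpr : γ ≠ Finset.univ)
    (ρ : Matrix (Bits n) (Bits n) ℂ) (hρ : ρ.PosSemidef) (htr : ρ.trace = 1)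
    (hdec : ∃ (k : ℕ) (p : Fin k → ℝ) (ψ : Fin k → Bits n → ℂ),
      (∀ α, 0 ≤ p α) ∧ (∀ α, ∑ j, ‖ψ α j‖ ^ 2 = 1) ∧
      (∀ α, SeparableAcross γ (ψ α)) ∧
      ρ = ∑ α, (p α : ℂ) • Matrix.of (fun a b => ψ α a * (starRingEnd ℂ) (ψ α b))) :
    convexRoof (eta γ) ρ = 0 := by
  obtain ⟨k, p, ψ, hp, hnorm, hsep, hρeq⟩ := hdec
  unfold convexRoof
  apply le_antisymm
  · apply csInf_le
    · exact ⟨0, fun x ⟨k, p, ψ, hp, _, _, hx⟩ => hx ▸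
        Finset.sum_nonneg fun α _ => mul_nonneg (hp α) (eta_nonneg γ (ψ α))⟩
    · refine ⟨k, p, ψ, hp, hnorm, hρeq, ?_⟩
      symm
      apply Finset.sum_eq_zero
      intro α _
      rw [eta_eq_zero_of_sep γ (ψ α) (hsep α), mul_zero]
  · apply le_csInf
    · exact ⟨0, k, p, ψ, hp, hnorm, hρeq, (Finset.sum_eq_zero fun α _ => by
        rw [eta_eq_zero_of_sep γ (ψ α) (hsep α), mul_zero]).symm⟩
    · rintro x ⟨k', p', ψ', hp', _, _, hx⟩
      exact hx ▸ Finset.sum_nonneg fun α _ => mul_nonneg (hp' α) (eta_nonneg γ (ψ' α))
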